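/- arXiv:0812.2455 — 3 statements merged into one kernel-verified Lean document; each statement's English description precedes it below -/
import Mathlib

section
/- Let r ≥ 1 and let α₁,…,α_r be real numbers with 1, α₁,…,α_r linearly independent over ℚ. Let (m_ν) be the sequence of best approximations with M_ν = max_{1≤j≤r}|m_{j,ν}|. Then for every positive integer ν one has M_{ν + 2^{2r+1} - 2^{r+1}} ≥ 2·M_ν. -/
open Finset MeasureTheory

/-- The value of the linear form: `ζ(m) = m₀ + Σ mⱼ αⱼ`. -/
def zetaF {r : ℕ} (α : Fin r → ℝ) (m₀ : ℤ) (m : Fin r → ℤ) : ℝ :=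
  (m₀ : ℝ) + ∑ j, (m j : ℝ) * α j

/-- `M(m) = max_{1 ≤ j ≤ r} |m_j|` (as a natural number). -/
def Mnorm {r : ℕ} (m : Fin r → ℤ) : ℕ :=
  Finset.univ.sup fun j => (m j).natAbs

/-- `m = (m₀, m₁, …, m_r)` is a best approximation (in the sense of linear form)
for `α₁, …, α_r`. -/
def IsBestApprox {r : ℕ} (α : Fin r → ℝ) (m₀ : ℤ) (m : Fin r → ℤ) : Prop :=
  m ≠ 0 ∧ 0 < zetaF α m₀ m ∧
    ∀ (n₀ : ℤ) (n : Fin r → ℤ), n ≠ 0 → Mnorm n ≤ Mnorm m →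
      zetaF α m₀ m ≤ |zetaF α n₀ n|

/-- `(mz ν, m ν)` is the sequence of all best approximations, ordered by
strictly increasing `M_ν`. -/
def IsBASeq {r : ℕ} (α : Fin r → ℝ) (mz : ℕ → ℤ) (m : ℕ → Fin r → ℤ) : Prop :=
  (∀ ν, IsBestApprox α (mz ν) (m ν)) ∧
  StrictMono (fun ν => Mnorm (m ν)) ∧
  ∀ (p₀ : ℤ) (p : Fin r → ℤ), IsBestApprox α p₀ p → ∃ ν, p₀ = mz ν ∧ p = m ν

/-- `1, α₁, …, α_r` are linearly independent over `ℚ`. -/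
def LinIndepWithOne {r : ℕ} (α : Fin r → ℝ) : Prop :=
  LinearIndependent ℚ (Fin.cons (1 : ℝ) α : Fin (r + 1) → ℝ)

/-- `(α₁, …, α_r)` is a `ψ`-singular tuple (in the sense of linear form). -/
def IsPsiSingular {r : ℕ} (α : Fin r → ℝ) (ψ : ℝ → ℝ) : Prop :=
  ∀ T : ℝ, 1 < T → ∃ n : Fin r → ℤ, n ≠ 0 ∧ (∀ j, (|n j| : ℝ) ≤ T) ∧
    ∃ n₀ : ℤ, |zetaF α n₀ n| < ψ T

/-! If `M_{ν+K} < 2 M_ν` with `K = 2^{2r+1} - 2^{r+1}`, then the `K + 1` best approximations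
`m_ν, …, m_{ν+K}` have all coordinates in `(-2M_ν, 2M_ν)` and `ζ`-values in `(0, ζ_ν]`.
Cutting that cube into `4^r ≤ K` boxes of side `M_ν`, two of them share a box; their difference
`n` has `M(n) < M_ν` and `|ζ(n)| < ζ_ν`, contradicting the minimality of `m_ν`. -/

lemma abs_sub_lt_of_ediv_eq {a b d : ℤ} (hd : 0 < d) (h : a / d = b / d) : |a - b| < d := by
  have ha := Int.mul_ediv_add_emod a d
  have hb := Int.mul_ediv_add_emod b d
  have := Int.emod_nonneg a hd.ne'
  have := Int.emod_nonneg b hd.ne'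
  have := Int.emod_lt_of_pos a hd
  have := Int.emod_lt_of_pos b hd
  rw [h] at ha
  rw [abs_lt]
  constructor <;> linarith

lemma zetaF_sub {r : ℕ} (α : Fin r → ℝ) (a₀ b₀ : ℤ) (a b : Fin r → ℤ) :
    zetaF α (a₀ - b₀) (a - b) = zetaF α a₀ a - zetaF α b₀ b := by
  simp only [zetaF, Pi.sub_apply, Int.cast_sub, sub_mul, Finset.sum_sub_distrib]
  ring

lemma natAbs_le_Mnorm {r : ℕ} (m : Fin r → ℤ) (i : Fin r) : (m i).natAbs ≤ Mnorm m :=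
  Finset.le_sup (f := fun j => (m j).natAbs) (Finset.mem_univ i)

lemma Mnorm_lt_iff {r : ℕ} {m : Fin r → ℤ} {c : ℕ} (hc : 0 < c) :
    Mnorm m < c ↔ ∀ i, (m i).natAbs < c :=
  Finset.sup_lt_iff hc |>.trans <| by simp

lemma Mnorm_pos {r : ℕ} {m : Fin r → ℤ} (hm : m ≠ 0) : 0 < Mnorm m := by
  obtain ⟨i, hi⟩ := Function.ne_iff.mp hm
  exact (Int.natAbs_pos.mpr hi).trans_le (natAbs_le_Mnorm m i)

/-- Pigeonhole over the `(2k)^r` boxes `∏ᵢ [tM, (t+1)M)` covering `{Mnorm x < kM}`. -/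
lemma exists_ne_Mnorm_sub_lt {r k M : ℕ} (hM : 0 < M) (S : Finset (Fin r → ℤ))
    (hS : (2 * k) ^ r < S.card) (hbound : ∀ x ∈ S, Mnorm x < k * M) :
    ∃ x ∈ S, ∃ y ∈ S, x ≠ y ∧ Mnorm (x - y) < M := by
  have hMZ : (0 : ℤ) < M := by exact_mod_cast hM
  let box : (Fin r → ℤ) → Fin r → ℤ := fun x i => (x i + k * M) / M
  let labels := Fintype.piFinset fun _ : Fin r => Finset.Ico (0 : ℤ) ((2 * k : ℕ) : ℤ)
  have hcard : labels.card < S.card := by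
    simpa only [labels, Fintype.card_piFinset, Int.card_Ico, sub_zero, Int.toNat_natCast,
      Finset.prod_const, Finset.card_univ, Fintype.card_fin] using hS
  have hmaps : ∀ x ∈ S, box x ∈ labels := by
    intro x hx
    have hkM : 0 < k * M := (Nat.zero_le _).trans_lt (hbound x hx)
    simp only [labels, Fintype.mem_piFinset, Finset.mem_Ico]
    intro i
    have hxi := (Mnorm_lt_iff hkM).mp (hbound x hx) i
    have hxi' : |x i| < k * M := by rw [Int.abs_eq_natAbs]; exact_mod_cast hxi
    rw [abs_lt] at hxi'
    refine ⟨Int.ediv_nonneg (by linarith) hMZ.le, Int.ediv_lt_of_lt_mul hMZ ?_⟩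
    push_cast
    linarith
  obtain ⟨x, hx, y, hy, hxy, hbox⟩ := Finset.exists_ne_map_eq_of_card_lt_of_maps_to hcard hmaps
  refine ⟨x, hx, y, hy, hxy, (Mnorm_lt_iff hM).mpr fun i => ?_⟩
  have := abs_sub_lt_of_ediv_eq hMZ (congrFun hbox i)
  rw [add_sub_add_right_eq_sub, Int.abs_eq_natAbs] at this
  exact_mod_cast this

lemma IsBestApprox.Mnorm_lt_Mnorm_sub {r : ℕ} {α : Fin r → ℝ} {m₀ p₀ q₀ : ℤ}
    {m p q : Fin r → ℤ} (hm : IsBestApprox α m₀ m) (hpq : p ≠ q)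
    (hp : 0 < zetaF α p₀ p) (hp' : zetaF α p₀ p ≤ zetaF α m₀ m)
    (hq : 0 < zetaF α q₀ q) (hq' : zetaF α q₀ q ≤ zetaF α m₀ m) :
    Mnorm m < Mnorm (p - q) := by
  by_contra! hle
  have hmin := hm.2.2 (p₀ - q₀) (p - q) (sub_ne_zero.mpr hpq) hle
  rw [zetaF_sub] at hmin
  have : |zetaF α p₀ p - zetaF α q₀ q| < zetaF α m₀ m :=
    abs_sub_lt_iff.mpr ⟨by linarith, by linarith⟩
  linarith

lemma four_pow_lt_two_pow_sub {r : ℕ} (hr : 1 ≤ r) :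
    (2 * 2) ^ r < 2 ^ (2 * r + 1) - 2 ^ (r + 1) + 1 := by
  have h₁ : 2 ^ (r + 1) ≤ 2 ^ (2 * r) := Nat.pow_le_pow_right (by norm_num) (by omega)
  have h₂ : (2 * 2) ^ r = 2 ^ (2 * r) := by rw [pow_mul, sq]
  rw [h₂, pow_succ]
  omega

theorem stmt1_general (r : ℕ) (hr : 1 ≤ r) (α : Fin r → ℝ)
    (mz : ℕ → ℤ) (m : ℕ → Fin r → ℤ) (hBA : IsBASeq α mz m) (ν : ℕ) :
    2 * Mnorm (m ν) ≤ Mnorm (m (ν + (2 ^ (2 * r + 1) - 2 ^ (r + 1)))) := by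
  obtain ⟨hbest, hmono, -⟩ := hBA
  set K := 2 ^ (2 * r + 1) - 2 ^ (r + 1)
  by_contra! hlast
  have hsmall : ∀ j ≤ K, Mnorm (m (ν + j)) < 2 * Mnorm (m ν) := fun j hj =>
    (hmono.monotone (by omega : ν + j ≤ ν + K)).trans_lt hlast
  have hzeta : ∀ j, zetaF α (mz (ν + j)) (m (ν + j)) ≤ zetaF α (mz ν) (m ν) := fun j => by
    simpa [abs_of_pos (hbest ν).2.1] using
      (hbest (ν + j)).2.2 (mz ν) (m ν) (hbest ν).1 (hmono.monotone (Nat.le_add_right ν j))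
  let S := (Finset.range (K + 1)).image fun j => m (ν + j)
  have hcard : S.card = K + 1 := by
    have hinj : Function.Injective fun j => m (ν + j) :=
      Function.Injective.of_comp (f := Mnorm) (hmono.comp (strictMono_id.const_add ν)).injective
    exact (Finset.card_image_of_injective _ hinj).trans (Finset.card_range _)
  obtain ⟨_, hx, _, hy, hxy, hdiff⟩ := exists_ne_Mnorm_sub_lt (Mnorm_pos (hbest ν).1) S
    (hcard ▸ four_pow_lt_two_pow_sub hr) (by
      simp only [S, Finset.mem_image, Finset.mem_range, forall_exists_index, and_imp]
      rintro _ j hj rfl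
      exact hsmall j (by omega))
  obtain ⟨a, -, rfl⟩ := Finset.mem_image.mp hx
  obtain ⟨b, -, rfl⟩ := Finset.mem_image.mp hy
  exact (hdiff.trans ((hbest ν).Mnorm_lt_Mnorm_sub hxy (hbest _).2.1 (hzeta a)
    (hbest _).2.1 (hzeta b))).false

/-- `M_{ν + 2^{2r+1} - 2^{r+1}} ≥ 2 M_ν`. -/
theorem stmt1 (r : ℕ) (hr : 1 ≤ r) (α : Fin r → ℝ) (hα : LinIndepWithOne α)
    (mz : ℕ → ℤ) (m : ℕ → Fin r → ℤ) (hBA : IsBASeq α mz m) (ν : ℕ) :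
    2 * Mnorm (m ν) ≤ Mnorm (m (ν + (2 ^ (2 * r + 1) - 2 ^ (r + 1)))) :=
  stmt1_general r hr α mz m hBA ν
end

section
/- Let r ≥ 1 and suppose v₀, v₁, …, v_r ∈ ℤ^{r+1} are linearly independent integer vectors, all contained in the parallelepiped Π = {x ∈ ℝ^{r+1} : max_{1≤j≤r}|x_j| ≤ M, |x₀ + x₁α₁ + … + x_rα_r| ≤ ζ} for some reals M, ζ > 0 and α₁,…,α_r. Then ζ ≥ 1/((r+1)!·M^r). -/
open Finset MeasureTheory

/-- if `r+1` linearly independent integer vectors lie in the parallelepiped `Π`,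
then `ζ ≥ 1 / ((r+1)! · M^r)`. -/
theorem stmt3 (r : ℕ) (hr : 1 ≤ r) (α : Fin r → ℝ) (M ζ : ℝ) (hM : 0 < M) (hζ : 0 < ζ)
    (v : Fin (r + 1) → Fin (r + 1) → ℤ)
    (hindep : LinearIndependent ℚ fun i => (fun j => (v i j : ℚ)))
    (hin : ∀ i, (∀ j : Fin r, (|v i j.succ| : ℝ) ≤ M) ∧
      |(v i 0 : ℝ) + ∑ j : Fin r, (v i j.succ : ℝ) * α j| ≤ ζ) :
    1 / ((r + 1).factorial * M ^ r) ≤ ζ := by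
  set Vz : Matrix (Fin (r+1)) (Fin (r+1)) ℤ := Matrix.of v with hVzdef
  -- det over ℤ is nonzero
  have hmapq : Vz.map (Int.cast : ℤ → ℚ) = (Int.castRingHom ℚ).mapMatrix Vz := rfl
  have hdetq : (Vz.map (Int.cast : ℤ → ℚ)).det ≠ 0 := by
    have hu : IsUnit (Vz.map (Int.cast : ℤ → ℚ)) :=
      Matrix.linearIndependent_rows_iff_isUnit.mp hindep
    have := (Matrix.isUnit_iff_isUnit_det _).mp hu
    exact this.ne_zero
  have hdetz : Vz.det ≠ 0 := by
    intro h
    apply hdetq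
    rw [hmapq, ← RingHom.map_det, h]
    simp
  have hdet1 : (1 : ℝ) ≤ |((Vz.det : ℤ) : ℝ)| := by
    rw [← Int.cast_abs]
    exact_mod_cast Int.one_le_abs (by simpa using hdetz)
  -- real matrix
  set Vr : Matrix (Fin (r+1)) (Fin (r+1)) ℝ := Vz.map (Int.cast : ℤ → ℝ) with hVrdef
  have hmapr : Vz.map (Int.cast : ℤ → ℝ) = (Int.castRingHom ℝ).mapMatrix Vz := rfl
  have hdetVr : Vr.det = ((Vz.det : ℤ) : ℝ) := by
    rw [hVrdef, hmapr, ← RingHom.map_det]; rfl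
  set c : Fin (r+1) → ℝ := Fin.cons 1 α with hc
  set A : Matrix (Fin (r+1)) (Fin (r+1)) ℝ :=
    Vr.updateCol 0 (fun k => ∑ i, (c i) • Vr k i) with hA
  have hdetA : A.det = Vr.det := by
    rw [hA, Matrix.det_updateCol_sum]
    simp [hc]
  -- entry bounds
  have hA0 : ∀ k, |A k 0| ≤ ζ := by
    intro k
    have : A k 0 = (v k 0 : ℝ) + ∑ j : Fin r, (v k j.succ : ℝ) * α j := by
      rw [hA, Matrix.updateCol_apply, if_pos rfl]
      rw [Fin.sum_univ_succ]
      simp [hc, hVrdef, hVzdef, mul_comm]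
    rw [this]
    exact (hin k).2
  have hAs : ∀ k (j : Fin r), |A k j.succ| ≤ M := by
    intro k j
    have : A k j.succ = (v k j.succ : ℝ) := by
      rw [hA, Matrix.updateCol_apply, if_neg (Fin.succ_ne_zero j)]
      simp [hVrdef, hVzdef]
    rw [this]
    exact (hin k).1 j
  -- Leibniz bound
  have hbound : |A.det| ≤ ((r+1).factorial : ℝ) * (ζ * M ^ r) := by
    rw [Matrix.det_apply]
    calc |∑ σ : Equiv.Perm (Fin (r+1)), Equiv.Perm.sign σ • ∏ i, A (σ i) i|
        ≤ ∑ σ : Equiv.Perm (Fin (r+1)), |Equiv.Perm.sign σ • ∏ i, A (σ i) i| :=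
          Finset.abs_sum_le_sum_abs _ _
      _ ≤ (Finset.univ : Finset (Equiv.Perm (Fin (r+1)))).card • (ζ * M ^ r) := by
          apply Finset.sum_le_card_nsmul
          intro σ _
          rw [Units.smul_def, zsmul_eq_mul, abs_mul]
          have hsign : |((Equiv.Perm.sign σ : ℤ) : ℝ)| = 1 := by
            rcases Int.units_eq_one_or (Equiv.Perm.sign σ) with h | h <;> simp [h]
          rw [hsign, one_mul, Finset.abs_prod]
          rw [Fin.prod_univ_succ]
          have h1 : ∏ j : Fin r, |A (σ j.succ) j.succ| ≤ M ^ r := by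
            calc ∏ j : Fin r, |A (σ j.succ) j.succ| ≤ ∏ _j : Fin r, M :=
                  Finset.prod_le_prod (fun j _ => abs_nonneg _) (fun j _ => hAs _ j)
              _ = M ^ r := by simp
          exact mul_le_mul (hA0 _) h1 (Finset.prod_nonneg fun j _ => abs_nonneg _) hζ.le
      _ = ((r+1).factorial : ℝ) * (ζ * M ^ r) := by
          rw [Finset.card_univ, Fintype.card_perm, Fintype.card_fin, nsmul_eq_mul]
  have key : (1:ℝ) ≤ ((r+1).factorial : ℝ) * (ζ * M ^ r) := by
    calc (1:ℝ) ≤ |((Vz.det : ℤ) : ℝ)| := hdet1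
      _ = |A.det| := by rw [hdetA, hdetVr]
      _ ≤ _ := hbound
  rw [div_le_iff₀ (by positivity)]
  nlinarith [key, pow_pos hM r]
end

section
/- (Borel–Cantelli degeneracy criterion) Let r, k ≥ 1 and let α₁,…,α_r be reals with 1,α₁,…,α_r linearly independent over ℚ. Let (m_ν), ζ_ν, M_ν be the best-approximation data for (α₁,…,α_r). Suppose the series Σ_ν M_{ν+1}^{r+k}·(log M_{ν+1})^{δ_k}·ζ_ν converges, where δ_k = 1 if k = 1 and δ_k = 0 if k ≥ 2. Then for Lebesgue-almost every (β₁,…,β_k) ∈ [0,1]^k there exists ν₀ such that for all ν ≥ ν₀ and all integer points (m₀,…,m_{r+k}) with max_{1≤j≤r+k}|m_j| ≤ M_{ν+1} and (m_{r+1},…,m_{r+k}) ≠ 0, one has |m₀ + m₁α₁ + … + m_rα_r + m_{r+1}β₁ + … + m_{r+k}β_k| ≥ ζ_ν. -/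
open Finset MeasureTheory

/-!
For fixed integer vectors `n, p` with `p ≠ 0`, the `β` in the unit cube for which
`n₀ + ⟨n, α⟩ + ⟨p, β⟩` is within `ζ` of zero for some `n₀ ∈ ℤ` form a union of slabs; slicing along a
coordinate `i` with `p i ≠ 0`, each slice is covered by `O(|p i|)` intervals of length `2ζ / |p i|`,
so the slabs have measure `O(ζ)` uniformly in `n, p`. Since `ζ_ν ≤ ζ_0` and there are at most
`(2 M_{ν+1} + 1) ^ (r + k)` admissible vectors, the `ν`-th exceptional set has measure
`O(M_{ν+1} ^ (r + k) ζ_ν)`, a summable sequence, and Borel–Cantelli concludes.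
-/

open Set Filter
open scoped ENNReal

lemma natCast_card_Icc_ceil_floor_le {a b : ℝ} (h : a ≤ b) :
    ((Finset.Icc ⌈a⌉ ⌊b⌋).card : ℝ) ≤ b - a + 1 := by
  have hcard : ((Finset.Icc ⌈a⌉ ⌊b⌋).card : ℤ) = max (⌊b⌋ + 1 - ⌈a⌉) 0 := by
    rw [Int.card_Icc, Int.toNat_eq_max]
  have hfloor := Int.floor_le b
  have hceil := Int.le_ceil a
  calc ((Finset.Icc ⌈a⌉ ⌊b⌋).card : ℝ) = max ((⌊b⌋ : ℝ) + 1 - ⌈a⌉) 0 := by exact_mod_cast hcard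
    _ ≤ b - a + 1 := max_le (by linarith) (by linarith)

lemma volume_Icc_inter_near_int_le (q : ℤ) (hq : q ≠ 0) (c : ℝ) {ζ : ℝ} (hζ : 0 ≤ ζ) :
    volume (Icc (0 : ℝ) 1 ∩ {x | ∃ n₀ : ℤ, |n₀ + c + q * x| < ζ}) ≤
      ENNReal.ofReal ((4 * ζ + 6) * ζ) := by
  set Q := |(q : ℝ)|
  have hQ : 1 ≤ Q := by
    simpa only [Q, Int.cast_abs, Int.cast_one] using (Int.cast_le (R := ℝ)).2 (Int.one_le_abs hq)
  set S := Finset.Icc ⌈-c - ζ - Q⌉ ⌊-c + ζ + Q⌋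
  have hcover : Icc (0 : ℝ) 1 ∩ {x | ∃ n₀ : ℤ, |n₀ + c + q * x| < ζ} ⊆
      ⋃ n₀ ∈ S, Metric.ball ((-n₀ - c) / q) (ζ / Q) := by
    rintro x ⟨⟨hx0, hx1⟩, n₀, hn₀⟩
    have hqx : |q * x| ≤ Q := by
      rw [abs_mul, abs_of_nonneg hx0]
      exact mul_le_of_le_one_right (abs_nonneg _) hx1
    have hdist : |x - (-n₀ - c) / q| * Q = |n₀ + c + q * x| := by
      rw [← abs_mul]
      congr 1
      field_simp
      ring
    refine mem_biUnion (x := n₀) ?_ ?_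
    · rw [abs_le] at hqx
      rw [abs_lt] at hn₀
      rw [Finset.mem_coe, Finset.mem_Icc, Int.ceil_le, Int.le_floor]
      constructor <;> linarith
    · rw [Metric.mem_ball, Real.dist_eq, lt_div_iff₀ (by linarith), hdist]
      exact hn₀
  have hcard : (S.card : ℝ) ≤ 2 * ζ + 2 * Q + 1 := by
    have := natCast_card_Icc_ceil_floor_le (a := -c - ζ - Q) (b := -c + ζ + Q) (by linarith)
    linarith
  calc volume (Icc (0 : ℝ) 1 ∩ {x | ∃ n₀ : ℤ, |n₀ + c + q * x| < ζ})
      ≤ ∑ n₀ ∈ S, volume (Metric.ball ((-n₀ - c) / q : ℝ) (ζ / Q)) :=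
        (measure_mono hcover).trans (measure_biUnion_finset_le _ _)
    _ = ENNReal.ofReal (S.card * (2 * (ζ / Q))) := by
        rw [ENNReal.ofReal_mul (by positivity), ENNReal.ofReal_natCast]
        simp [Real.volume_ball]
    _ ≤ ENNReal.ofReal ((4 * ζ + 6) * ζ) := by
        refine ENNReal.ofReal_le_ofReal ?_
        calc (S.card : ℝ) * (2 * (ζ / Q)) ≤ (2 * ζ + 2 * Q + 1) * (2 * (ζ / Q)) := by gcongr
          _ = 4 * ζ + 2 * ζ * ((2 * ζ + 1) / Q) := by field_simp; ring
          _ ≤ 4 * ζ + 2 * ζ * (2 * ζ + 1) := by gcongr; exact div_le_self (by positivity) hQ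
          _ = (4 * ζ + 6) * ζ := by ring

theorem MeasureTheory.Measure.pi_le_of_forall_slice_le {n : ℕ} {α : Fin (n + 1) → Type*}
    [∀ i, MeasurableSpace (α i)] (μ : ∀ i, Measure (α i)) [∀ i, IsProbabilityMeasure (μ i)]
    (i : Fin (n + 1)) {s : Set (∀ j, α j)} (hs : MeasurableSet s) {C : ℝ≥0∞}
    (h : ∀ y, μ i {x | i.insertNth x y ∈ s} ≤ C) : Measure.pi μ s ≤ C := by
  have he := measurePreserving_piFinSuccAbove μ i
  rw [← he.symm.measure_preimage hs.nullMeasurableSet,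
    Measure.prod_apply_symm ((MeasurableEquiv.measurableSet_preimage _).2 hs)]
  calc _ ≤ ∫⁻ _, C ∂Measure.pi fun j => μ (i.succAbove j) := lintegral_mono fun y => h y
    _ = C := by simp

lemma volume_unitCube_near_int_le {n : ℕ} (p : Fin n → ℤ) (hp : p ≠ 0) (c : ℝ) {ζ : ℝ}
    (hζ : 0 ≤ ζ) :
    volume.restrict (univ.pi fun _ => Icc (0 : ℝ) 1)
        {β : Fin n → ℝ | ∃ n₀ : ℤ, |n₀ + c + ∑ i, (p i : ℝ) * β i| < ζ} ≤
      ENNReal.ofReal ((4 * ζ + 6) * ζ) := by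
  obtain ⟨i, hi⟩ := Function.ne_iff.mp hp
  cases n with
  | zero => exact i.elim0
  | succ n =>
  have hmeas : MeasurableSet
      {β : Fin (n + 1) → ℝ | ∃ n₀ : ℤ, |n₀ + c + ∑ i, (p i : ℝ) * β i| < ζ} := by
    simp only [ofPred_exists]
    exact MeasurableSet.iUnion fun n₀ => measurableSet_lt (by fun_prop) measurable_const
  have : IsProbabilityMeasure (volume.restrict (Icc (0 : ℝ) 1)) := ⟨by simp⟩
  rw [volume_pi, Measure.restrict_pi_pi]
  refine Measure.pi_le_of_forall_slice_le _ i hmeas fun y => ?_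
  rw [Measure.restrict_apply' measurableSet_Icc, inter_comm]
  refine (measure_mono ?_).trans
    (volume_Icc_inter_near_int_le (p i) hi (c + ∑ j, (p (i.succAbove j) : ℝ) * y j) hζ)
  rintro x ⟨hx, n₀, hn₀⟩
  refine ⟨hx, n₀, ?_⟩
  simp only [Fin.sum_univ_succAbove _ i, Fin.insertNth_apply_same,
    Fin.insertNth_apply_succAbove] at hn₀
  convert hn₀ using 2
  ring

def exceptionalSet {r : ℕ} (k : ℕ) (α : Fin r → ℝ) (M : ℕ) (ζ : ℝ) : Set (Fin k → ℝ) :=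
  {β | ∃ (n₀ : ℤ) (n : Fin r → ℤ) (p : Fin k → ℤ), (∀ j, (n j).natAbs ≤ M) ∧
    (∀ i, (p i).natAbs ≤ M) ∧ p ≠ 0 ∧ |(n₀ : ℝ) + ∑ j, (n j : ℝ) * α j + ∑ i, (p i : ℝ) * β i| < ζ}

lemma card_piFinset_Icc_neg (d M : ℕ) :
    (Fintype.piFinset fun _ : Fin d => Finset.Icc (-(M : ℤ)) M).card = (2 * M + 1) ^ d := by
  rw [Fintype.card_piFinset, Int.card_Icc, Finset.prod_const, Finset.card_univ, Fintype.card_fin]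
  congr 1
  omega

lemma measure_exceptionalSet_le {r : ℕ} (k : ℕ) (α : Fin r → ℝ) (M : ℕ) {ζ : ℝ} (hζ : 0 ≤ ζ) :
    volume.restrict (univ.pi fun _ => Icc (0 : ℝ) 1) (exceptionalSet k α M ζ) ≤
      ENNReal.ofReal ((2 * M + 1) ^ (r + k) * ((4 * ζ + 6) * ζ)) := by
  set B : ∀ d, Finset (Fin d → ℤ) := fun d => Fintype.piFinset fun _ => Finset.Icc (-(M : ℤ)) M
  set S := (B r ×ˢ B k).filter (·.2 ≠ 0)
  have hcover : exceptionalSet k α M ζ ⊆ ⋃ np ∈ S,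
      {β | ∃ n₀ : ℤ, |n₀ + ∑ j, (np.1 j : ℝ) * α j + ∑ i, (np.2 i : ℝ) * β i| < ζ} := by
    rintro β ⟨n₀, n, p, hn, hp, hp0, hlt⟩
    refine mem_biUnion (x := (n, p)) ?_ ⟨n₀, hlt⟩
    refine Finset.mem_filter.2 ⟨Finset.mem_product.2 ⟨?_, ?_⟩, hp0⟩ <;>
      refine Fintype.mem_piFinset.2 fun j => Finset.mem_Icc.2 ?_
    · have := hn j; dsimp only; omega
    · have := hp j; dsimp only; omega
  have hcard : (S.card : ℝ) ≤ (2 * M + 1) ^ (r + k) := by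
    have : S.card ≤ (2 * M + 1) ^ (r + k) := by
      calc S.card ≤ (B r ×ˢ B k).card := Finset.card_filter_le _ _
        _ = (2 * M + 1) ^ (r + k) := by
          rw [Finset.card_product, card_piFinset_Icc_neg, card_piFinset_Icc_neg, pow_add]
    exact_mod_cast this
  calc _ ≤ ∑ np ∈ S, volume.restrict (univ.pi fun _ => Icc (0 : ℝ) 1)
        {β | ∃ n₀ : ℤ, |n₀ + ∑ j, (np.1 j : ℝ) * α j + ∑ i, (np.2 i : ℝ) * β i| < ζ} :=
        (measure_mono hcover).trans (measure_biUnion_finset_le _ _)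
    _ ≤ S.card • ENNReal.ofReal ((4 * ζ + 6) * ζ) :=
        Finset.sum_le_card_nsmul _ _ _ fun np hnp =>
          volume_unitCube_near_int_le np.2 (Finset.mem_filter.1 hnp).2 _ hζ
    _ ≤ _ := by
        rw [nsmul_eq_mul, ← ENNReal.ofReal_natCast, ← ENNReal.ofReal_mul (by positivity)]
        gcongr

theorem MeasureTheory.ae_eventually_notMem_of_summable {Ω : Type*} [MeasurableSpace Ω]
    {μ : Measure Ω} {s : ℕ → Set Ω} {f : ℕ → ℝ} (hf : Summable f)
    (h : ∀ n, μ (s n) ≤ ENNReal.ofReal (f n)) : ∀ᵐ x ∂μ, ∀ᶠ n in atTop, x ∉ s n :=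
  ae_eventually_notMem <| ne_top_of_le_ne_top
    (ENNReal.tsum_coe_ne_top_iff_summable.2 hf.toNNReal) (ENNReal.tsum_le_tsum h)

lemma one_le_Mnorm {r : ℕ} {m : Fin r → ℤ} (hm : m ≠ 0) : 1 ≤ Mnorm m := by
  obtain ⟨j, hj⟩ := Function.ne_iff.mp hm
  exact (Int.natAbs_pos.2 hj).trans_le
    (Finset.le_sup (f := fun i => (m i).natAbs) (Finset.mem_univ j))

namespace IsBASeq

variable {r : ℕ} {α : Fin r → ℝ} {mz : ℕ → ℤ} {m : ℕ → Fin r → ℤ}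

lemma zetaF_pos (hBA : IsBASeq α mz m) (ν : ℕ) : 0 < zetaF α (mz ν) (m ν) :=
  (hBA.1 ν).2.1

lemma antitone_zetaF (hBA : IsBASeq α mz m) : Antitone fun ν => zetaF α (mz ν) (m ν) := by
  intro μ ν hμν
  have := (hBA.1 ν).2.2 (mz μ) (m μ) (hBA.1 μ).1 (hBA.2.1.monotone hμν)
  rwa [abs_of_pos (hBA.zetaF_pos μ)] at this

lemma two_le_Mnorm_succ (hBA : IsBASeq α mz m) (ν : ℕ) : 2 ≤ Mnorm (m (ν + 1)) :=
  (one_le_Mnorm (hBA.1 0).1).trans_lt (hBA.2.1 ν.succ_pos)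

lemma measure_exceptionalSet_le (hBA : IsBASeq α mz m) (k ν : ℕ) :
    volume.restrict (univ.pi fun _ => Icc (0 : ℝ) 1)
        (exceptionalSet k α (Mnorm (m (ν + 1))) (zetaF α (mz ν) (m ν))) ≤
      ENNReal.ofReal (2 * 3 ^ (r + k) * (4 * zetaF α (mz 0) (m 0) + 6) *
        ((Mnorm (m (ν + 1)) : ℝ) ^ (r + k) *
          (if k = 1 then Real.log (Mnorm (m (ν + 1))) else 1) * zetaF α (mz ν) (m ν))) := by
  set M := Mnorm (m (ν + 1))
  set ζ := zetaF α (mz ν) (m ν)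
  have hζ : 0 < ζ := hBA.zetaF_pos ν
  have hM : (2 : ℝ) ≤ M := by exact_mod_cast hBA.two_le_Mnorm_succ ν
  have hw : 1 ≤ 2 * (if k = 1 then Real.log M else 1) := by
    split_ifs
    · have := Real.log_le_log two_pos hM
      have := Real.log_two_gt_d9
      linarith
    · norm_num
  refine (_root_.measure_exceptionalSet_le k α M hζ.le).trans (ENNReal.ofReal_le_ofReal ?_)
  calc (2 * M + 1 : ℝ) ^ (r + k) * ((4 * ζ + 6) * ζ)
      ≤ (3 * M) ^ (r + k) * ((4 * zetaF α (mz 0) (m 0) + 6) * ζ) := by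
        gcongr
        · linarith
        · exact hBA.antitone_zetaF ν.zero_le
    _ = 3 ^ (r + k) * (4 * zetaF α (mz 0) (m 0) + 6) * ((M : ℝ) ^ (r + k) * 1 * ζ) := by ring
    _ ≤ 3 ^ (r + k) * (4 * zetaF α (mz 0) (m 0) + 6) *
          ((M : ℝ) ^ (r + k) * (2 * (if k = 1 then Real.log M else 1)) * ζ) := by
        have : 0 ≤ zetaF α (mz 0) (m 0) := (hBA.zetaF_pos 0).le
        gcongr
    _ = _ := by ring

end IsBASeq

theorem stmt8_general (r k : ℕ) (α : Fin r → ℝ)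
    (mz : ℕ → ℤ) (m : ℕ → Fin r → ℤ) (hBA : IsBASeq α mz m)
    (hsum : Summable fun ν => (Mnorm (m (ν + 1)) : ℝ) ^ (r + k) *
      (if k = 1 then Real.log (Mnorm (m (ν + 1))) else 1) * zetaF α (mz ν) (m ν)) :
    ∀ᵐ β : Fin k → ℝ ∂(volume.restrict (Set.univ.pi fun _ => Set.Icc (0 : ℝ) 1)),
      ∃ ν₀ : ℕ, ∀ ν ≥ ν₀, ∀ (n₀ : ℤ) (n : Fin r → ℤ) (p : Fin k → ℤ),
        (∀ j, (n j).natAbs ≤ Mnorm (m (ν + 1))) →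
        (∀ j, (p j).natAbs ≤ Mnorm (m (ν + 1))) → p ≠ 0 →
        zetaF α (mz ν) (m ν) ≤
          |(n₀ : ℝ) + ∑ j, (n j : ℝ) * α j + ∑ i, (p i : ℝ) * β i| := by
  filter_upwards [ae_eventually_notMem_of_summable (hsum.mul_left _)
    (hBA.measure_exceptionalSet_le k)] with β hβ
  obtain ⟨ν₀, hν₀⟩ := eventually_atTop.1 hβ
  exact ⟨ν₀, fun ν hν n₀ n p hn hp hp0 =>
    not_lt.1 fun hlt => hν₀ ν hν ⟨n₀, n, p, hn, hp, hp0, hlt⟩⟩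

/-- Borel–Cantelli degeneracy criterion. -/
theorem stmt8 (r k : ℕ) (hr : 1 ≤ r) (hk : 1 ≤ k) (α : Fin r → ℝ) (hα : LinIndepWithOne α)
    (mz : ℕ → ℤ) (m : ℕ → Fin r → ℤ) (hBA : IsBASeq α mz m)
    (hsum : Summable fun ν => (Mnorm (m (ν + 1)) : ℝ) ^ (r + k) *
      (if k = 1 then Real.log (Mnorm (m (ν + 1))) else 1) * zetaF α (mz ν) (m ν)) :
    ∀ᵐ β : Fin k → ℝ ∂(volume.restrict (Set.univ.pi fun _ => Set.Icc (0 : ℝ) 1)),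
      ∃ ν₀ : ℕ, ∀ ν ≥ ν₀, ∀ (n₀ : ℤ) (n : Fin r → ℤ) (p : Fin k → ℤ),
        (∀ j, (n j).natAbs ≤ Mnorm (m (ν + 1))) →
        (∀ j, (p j).natAbs ≤ Mnorm (m (ν + 1))) → p ≠ 0 →
        zetaF α (mz ν) (m ν) ≤
          |(n₀ : ℝ) + ∑ j, (n j : ℝ) * α j + ∑ i, (p i : ℝ) * β i| :=
  stmt8_general r k α mz m hBA hsum
end
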